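/- arXiv:1107.1051 — 3 statements merged into one kernel-verified Lean document; each statement's English description precedes it below -/
import Mathlib

section
/- Let R be a commutative ring, let (a_1, a_2, a_3) ∈ Um_3(R) be a unimodular row, and let u ∈ R with Ra_1 + Ru = R. Then the rows (a_1, u·a_2, u·a_3) and (a_1, a_2, u²·a_3) are in the same elementary orbit, i.e., differ by right multiplication by an element of E_3(R). -/
open Matrix Polynomial

/-- Membership in the subgroup `E_n(R)` of `GL_n(R)` generated by the elementary
matrices `1 + r·e_{ij}` (`r ∈ R`, `i ≠ j`).  Since the inverse of an elementary
matrix is again elementary, this subgroup coincides with the multiplicative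
closure of the set of elementary matrices. -/
def IsElementary {ι : Type} [DecidableEq ι] [Fintype ι] {R : Type} [CommRing R]
    (M : Matrix ι ι R) : Prop :=
  M ∈ Submonoid.closure
    {A : Matrix ι ι R | ∃ (i j : ι) (r : R), i ≠ j ∧ A = 1 + Matrix.single i j r}

/-- A row `v` of length `n` is unimodular if its entries generate the unit ideal. -/
def IsUnimodular {R : Type} [CommRing R] {n : ℕ} (v : Fin n → R) : Prop :=
  ∃ w : Fin n → R, ∑ i, v i * w i = 1

/-- Block diagonal sum `M ⊥ N`. -/
def oplus {R : Type} [CommRing R] {a b : ℕ} (M : Matrix (Fin a) (Fin a) R)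
    (N : Matrix (Fin b) (Fin b) R) : Matrix (Fin (a + b)) (Fin (a + b)) R :=
  Matrix.reindex finSumFinEquiv finSumFinEquiv (Matrix.fromBlocks M 0 0 N)

/-- Reindexing a square matrix along an equality of sizes. -/
def matCast {R : Type} [CommRing R] {a b : ℕ} (h : a = b)
    (M : Matrix (Fin a) (Fin a) R) : Matrix (Fin b) (Fin b) R :=
  Matrix.reindex (finCongr h) (finCongr h) M

/-- `ψ_m` : the block diagonal sum of copies of `[[0,1],[-1,0]]` (`m` even). -/
def psi (R : Type) [CommRing R] (m : ℕ) : Matrix (Fin m) (Fin m) R :=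
  fun i j =>
    if (i : ℕ) + 1 = (j : ℕ) ∧ (i : ℕ) % 2 = 0 then 1
    else if (j : ℕ) + 1 = (i : ℕ) ∧ (j : ℕ) % 2 = 0 then -1
    else 0

/-- `σ_m` : the block diagonal sum of copies of `[[0,1],[1,0]]` (`m` even). -/
def sigmaMat (R : Type) [CommRing R] (m : ℕ) : Matrix (Fin m) (Fin m) R :=
  fun i j =>
    if ((i : ℕ) + 1 = (j : ℕ) ∧ (i : ℕ) % 2 = 0) ∨
       ((j : ℕ) + 1 = (i : ℕ) ∧ (j : ℕ) % 2 = 0) then 1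
    else 0

/-- The relation `∼` on invertible skew-symmetric matrices: for `G` of size
`2n = a` and `G'` of size `2m = b`, `G ∼ G'` iff there are `t ≥ 0` and an
elementary matrix `E ∈ E_{2(m+n+t)}(R)` with
`G ⊥ ψ_{2(m+t)} = Eᵗ (G' ⊥ ψ_{2(n+t)}) E`. -/
def WittEquiv {R : Type} [CommRing R] {a b : ℕ} (G : Matrix (Fin a) (Fin a) R)
    (G' : Matrix (Fin b) (Fin b) R) : Prop :=
  ∃ (t : ℕ) (E : Matrix (Fin (a + (b + 2 * t))) (Fin (a + (b + 2 * t))) R),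
    IsElementary E ∧
      oplus G (psi R (b + 2 * t)) =
        Eᵀ * matCast (by omega) (oplus G' (psi R (a + 2 * t))) * E

/-- The `4 × 4` invertible skew-symmetric matrix `V(v, w)` associated to a
unimodular row `v` with completion `w` (`v · wᵗ = 1`). -/
def VMat {R : Type} [CommRing R] (v w : Fin 3 → R) : Matrix (Fin 4) (Fin 4) R :=
  !![0, v 0, v 1, v 2;
     -(v 0), 0, w 2, -(w 1);
     -(v 1), -(w 2), 0, w 0;
     -(v 2), w 1, -(w 0), 0]

/-- `n`-fold orthogonal (block diagonal) sum of a matrix with itself. -/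
def oplusIter {R : Type} [CommRing R] {a : ℕ} (M : Matrix (Fin a) (Fin a) R) :
    (n : ℕ) → Matrix (Fin (n * a)) (Fin (n * a)) R
  | 0 => 0
  | n + 1 => matCast (by ring) (oplus M (oplusIter M n))

/-- The stabilization `diag(M, I_{n-d})` of a `d × d` matrix to an `n × n` matrix. -/
def stab {R : Type} [CommRing R] {d n : ℕ} (M : Matrix (Fin d) (Fin d) R) :
    Matrix (Fin n) (Fin n) R :=
  fun i j =>
    if hi : (i : ℕ) < d then
      if hj : (j : ℕ) < d then M ⟨i, hi⟩ ⟨j, hj⟩ else 0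
    else if (i : ℕ) = (j : ℕ) then 1 else 0

/-!
Modulo `a₁` the element `u` is invertible, with inverse `s` where `r a₁ + s u = 1`. So elementary
operations can trade a multiple of `u` in one entry against the other entries: first
`(a₁, u a₂, u a₃) ~ (a₁, u a₂, u a₃ + a₂)`, since `a₂ = r a₂ · a₁ + s · u a₂`; then clearing the
second entry with the third gives `(a₁, -u² a₃, u a₃ + a₂)`, and `u a₃` is removed from the third
entry in the same way as before. Finally `(y, z) ↦ (z, -y)` is a product of three elementary
operations.
-/

section ElementaryOrbit

variable {ι R : Type} [DecidableEq ι] [Fintype ι] [CommRing R]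

lemma vecMul_one_add_single (v : ι → R) (i j : ι) (t : R) :
    v ᵥ* (1 + single i j t) = Function.update v j (v j + v i * t) := by
  ext k
  rw [vecMul_add, vecMul_one, Pi.add_apply, Function.update_apply]
  split_ifs with hk
  · subst hk; simp [vecMul, dotProduct, single_apply]
  · simp [vecMul, dotProduct, Ne.symm hk]

lemma isElementary_one_add_single {i j : ι} (hij : i ≠ j) (t : R) :
    IsElementary (1 + single i j t) :=
  Submonoid.subset_closure ⟨i, j, t, hij, rfl⟩

def SameElementaryOrbit (v w : ι → R) : Prop :=
  ∃ E : Matrix ι ι R, IsElementary E ∧ v ᵥ* E = w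

namespace SameElementaryOrbit

lemma trans {u v w : ι → R} (huv : SameElementaryOrbit u v) (hvw : SameElementaryOrbit v w) :
    SameElementaryOrbit u w := by
  obtain ⟨E, hE, rfl⟩ := huv
  obtain ⟨F, hF, rfl⟩ := hvw
  exact ⟨E * F, Submonoid.mul_mem _ hE hF, (vecMul_vecMul _ _ _).symm⟩

instance : @Trans (ι → R) (ι → R) (ι → R) SameElementaryOrbit SameElementaryOrbit
    SameElementaryOrbit :=
  ⟨trans⟩

lemma of_update_add_mul {v w : ι → R} {i j : ι} (hij : i ≠ j) (t : R)
    (hw : Function.update v j (v j + v i * t) = w) : SameElementaryOrbit v w :=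
  ⟨_, isElementary_one_add_single hij t, (vecMul_one_add_single v i j t).trans hw⟩

variable {x y z : R}

lemma add_third {z' : R} (s t : R) (h : z' = z + x * s + y * t) :
    SameElementaryOrbit ![x, y, z] ![x, y, z'] := by
  refine (of_update_add_mul (i := 0) (j := 2) (by decide) s rfl).trans
    (of_update_add_mul (i := 1) (j := 2) (by decide) t ?_)
  ext k
  fin_cases k <;> simp [h]

lemma add_second {y' : R} (t : R) (h : y' = y + z * t) :
    SameElementaryOrbit ![x, y, z] ![x, y', z] := by
  refine of_update_add_mul (i := 2) (j := 1) (by decide) t ?_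
  ext k
  fin_cases k <;> simp [h]

lemma rotate {z' : R} (hz : z' = -y) : SameElementaryOrbit ![x, y, z] ![x, z, z'] := by
  subst z'
  calc SameElementaryOrbit ![x, y, z] ![x, y + z, z] := add_second 1 (by ring)
    SameElementaryOrbit _ ![x, y + z, -y] := add_third 0 (-1) (by ring)
    SameElementaryOrbit _ ![x, z, -y] := add_second 1 (by ring)

end SameElementaryOrbit

end ElementaryOrbit

theorem vaserstein_square_shift_general
    (R : Type) [CommRing R] (a₁ a₂ a₃ u : R)
    (hcomax : ∃ r s : R, r * a₁ + s * u = 1) :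
    ∃ E : Matrix (Fin 3) (Fin 3) R, IsElementary E ∧
      ![a₁, u * a₂, u * a₃] ᵥ* E = ![a₁, a₂, u ^ 2 * a₃] := by
  obtain ⟨r, s, hrs⟩ := hcomax
  show SameElementaryOrbit _ _
  calc SameElementaryOrbit ![a₁, u * a₂, u * a₃] ![a₁, u * a₂, u * a₃ + a₂] :=
        .add_third (r * a₂) s (by linear_combination -a₂ * hrs)
    SameElementaryOrbit _ ![a₁, -(u ^ 2 * a₃), u * a₃ + a₂] := .add_second (-u) (by ring)
    SameElementaryOrbit _ ![a₁, -(u ^ 2 * a₃), a₂] :=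
        .add_third (-(r * u * a₃)) s (by linear_combination u * a₃ * hrs)
    SameElementaryOrbit _ ![a₁, a₂, u ^ 2 * a₃] := .rotate (by ring)

/-- If `(a₁, a₂, a₃)` is unimodular and `Ra₁ + Ru = R`, then
`(a₁, u·a₂, u·a₃)` and `(a₁, a₂, u²·a₃)` are in the same elementary orbit. -/
theorem vaserstein_square_shift
    (R : Type) [CommRing R] (a₁ a₂ a₃ u : R)
    (hu : IsUnimodular ![a₁, a₂, a₃])
    (hcomax : ∃ r s : R, r * a₁ + s * u = 1) :
    ∃ E : Matrix (Fin 3) (Fin 3) R, IsElementary E ∧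
      ![a₁, u * a₂, u * a₃] ᵥ* E = ![a₁, a₂, u ^ 2 * a₃] :=
  vaserstein_square_shift_general R a₁ a₂ a₃ u hcomax
end

section
/- Let R be a commutative ring with 2 invertible, and let f_0, f_1, f_2 ∈ GL_{2n}(R) be invertible skew-symmetric matrices. Then (f_1 ⊥ σ_{2n}f_0^{-1}σ_{2n}) ⊥ (f_2 ⊥ σ_{2n}f_1^{-1}σ_{2n}) ∼ f_2 ⊥ σ_{2n}f_0^{-1}σ_{2n}. -/
open Matrix Polynomial

/-!
Up to congruence by elementary matrices, `⊥` is compatible with congruence in each summand, and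
two summands of the same size can be exchanged: conjugation by `[[0, 1], [-1, 0]]`, a product of
three elementary block transvections, swaps them. Exchanging `f₁` and `f₂` turns the left-hand side
into `(f₂ ⊥ σf₀⁻¹σ) ⊥ (f₁ ⊥ σf₁⁻¹σ)`. For every invertible skew-symmetric `f`, the sum
`f ⊥ g` with `g = σf⁻¹σ` is congruent to `[[0, -σ], [σ, 0]]`: the lower transvection by `σf` kills
`f`, and the upper one by `-½σg` then kills `g`. Taking `f = ψ`, for which `g = ψ`, shows that
`f₁ ⊥ σf₁⁻¹σ` is congruent to `ψ ⊥ ψ`, so the relation holds with `t = 0`.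
-/

namespace IsElementary

variable {ι κ : Type} [DecidableEq ι] [Fintype ι] [DecidableEq κ] [Fintype κ]
  {R : Type} [CommRing R]

theorem one : IsElementary (1 : Matrix ι ι R) := Submonoid.one_mem _

theorem mul {A B : Matrix ι ι R} (hA : IsElementary A) (hB : IsElementary B) :
    IsElementary (A * B) :=
  Submonoid.mul_mem _ hA hB

theorem one_add_single {i j : ι} (h : i ≠ j) (r : R) : IsElementary (1 + single i j r) :=
  Submonoid.subset_closure ⟨i, j, r, h, rfl⟩

theorem map {f : Matrix ι ι R →* Matrix κ κ R}
    (hf : ∀ i j r, i ≠ j → IsElementary (f (1 + single i j r)))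
    {A : Matrix ι ι R} (hA : IsElementary A) : IsElementary (f A) :=
  (Submonoid.closure_le (S := (Submonoid.closure _).comap f)).2
    (by rintro _ ⟨i, j, r, hij, rfl⟩; exact hf i j r hij) hA

theorem exists_mul_eq_one {A : Matrix ι ι R} (hA : IsElementary A) :
    ∃ B, IsElementary B ∧ A * B = 1 := by
  induction hA using Submonoid.closure_induction with
  | one => exact ⟨1, one, mul_one 1⟩
  | mul A B _ _ hA hB =>
    obtain ⟨A', hA', hAA'⟩ := hA
    obtain ⟨B', hB', hBB'⟩ := hB
    refine ⟨B' * A', hB'.mul hA', ?_⟩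
    rw [mul_assoc, ← mul_assoc B, hBB', one_mul, hAA']
  | mem A hA =>
    obtain ⟨i, j, r, hij, rfl⟩ := hA
    refine ⟨1 + single i j (-r), one_add_single hij _, ?_⟩
    rw [mul_add, add_mul, add_mul, single_mul_single_of_ne _ _ _ _ hij.symm]
    simp [add_assoc, ← single_add]

theorem reindex (e : ι ≃ κ) {A : Matrix ι ι R} (hA : IsElementary A) :
    IsElementary (Matrix.reindex e e A) :=
  map (f := (reindexRingEquiv R e : Matrix ι ι R →+* Matrix κ κ R).toMonoidHom)
    (fun i j r hij => by
      simpa [reindex_apply, submatrix_add, submatrix_one_equiv] using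
        one_add_single (e.injective.ne hij) r) hA

theorem fromBlocks_upper_unipotent (A : Matrix ι κ R) :
    IsElementary (fromBlocks (1 : Matrix ι ι R) A 0 1) := by
  induction A using Matrix.induction_on' with
  | h_zero => simpa using (one : IsElementary (1 : Matrix (ι ⊕ κ) (ι ⊕ κ) R))
  | h_add A B hA hB =>
    have : fromBlocks (1 : Matrix ι ι R) (A + B) 0 1 =
        fromBlocks 1 A 0 (1 : Matrix κ κ R) * fromBlocks 1 B 0 1 := by
      simp [fromBlocks_multiply, add_comm]
    exact this ▸ hA.mul hB
  | h_std_basis i j r =>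
    have : fromBlocks (1 : Matrix ι ι R) (single i j r) 0 (1 : Matrix κ κ R) =
        1 + single (.inl i) (.inr j) r := by
      ext (a | a) (b | b) <;> simp [one_apply, single]
    exact this ▸ one_add_single Sum.inl_ne_inr r

theorem fromBlocks_lower_unipotent (A : Matrix κ ι R) :
    IsElementary (fromBlocks (1 : Matrix ι ι R) 0 A 1) := by
  simpa [reindex_apply] using (fromBlocks_upper_unipotent A).reindex (Equiv.sumComm κ ι)

theorem fromBlocks_one₂₂ {A : Matrix ι ι R} (hA : IsElementary A) :
    IsElementary (fromBlocks A 0 0 (1 : Matrix κ κ R)) :=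
  map (f := { toFun := fun A => fromBlocks A 0 0 (1 : Matrix κ κ R)
              map_one' := fromBlocks_one
              map_mul' := fun A B => by simp [fromBlocks_multiply] })
    (fun i j r hij => by
      show IsElementary (fromBlocks (1 + single i j r) 0 0 (1 : Matrix κ κ R))
      have : fromBlocks (1 + single i j r) 0 0 (1 : Matrix κ κ R) =
          1 + single (.inl i) (.inl j) r := by
        ext (a | a) (b | b) <;> simp [one_apply, single]
      exact this ▸ one_add_single (Sum.inl_injective.ne hij) r) hA

theorem fromBlocks_one₁₁ {A : Matrix ι ι R} (hA : IsElementary A) :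
    IsElementary (fromBlocks (1 : Matrix κ κ R) 0 0 A) := by
  simpa [reindex_apply] using (fromBlocks_one₂₂ (κ := κ) hA).reindex (Equiv.sumComm ι κ)

theorem fromBlocks_zero_one_neg_one_zero :
    IsElementary (fromBlocks (0 : Matrix ι ι R) (1 : Matrix ι ι R) (-1) 0) := by
  have : fromBlocks (0 : Matrix ι ι R) (1 : Matrix ι ι R) (-1) 0 =
      fromBlocks 1 (1 : Matrix ι ι R) 0 1 * fromBlocks 1 0 (-1 : Matrix ι ι R) 1 *
        fromBlocks 1 (1 : Matrix ι ι R) 0 1 := by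
    simp [fromBlocks_multiply]
  exact this ▸ ((fromBlocks_upper_unipotent _).mul (fromBlocks_lower_unipotent _)).mul
    (fromBlocks_upper_unipotent _)

end IsElementary

theorem Matrix.transpose_eq_neg_of_mul_eq_one {ι R : Type} [Fintype ι] [DecidableEq ι] [CommRing R]
    {f f' : Matrix ι ι R} (hf : fᵀ = -f) (hff' : f * f' = 1) : f'ᵀ = -f' :=
  calc f'ᵀ = f'ᵀ * f * f' := by rw [Matrix.mul_assoc, hff', Matrix.mul_one]
    _ = -(f * f')ᵀ * f' := by rw [transpose_mul, hf, Matrix.mul_neg, neg_neg]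
    _ = -f' := by rw [hff', transpose_one, Matrix.neg_mul, Matrix.one_mul]

def ElemCong {ι R : Type} [DecidableEq ι] [Fintype ι] [CommRing R] (A B : Matrix ι ι R) : Prop :=
  ∃ E : Matrix ι ι R, IsElementary E ∧ A = Eᵀ * B * E

namespace ElemCong

variable {ι κ : Type} [DecidableEq ι] [Fintype ι] [DecidableEq κ] [Fintype κ]
  {R : Type} [CommRing R]

theorem trans {A B C : Matrix ι ι R} (hAB : ElemCong A B) (hBC : ElemCong B C) :
    ElemCong A C := by
  obtain ⟨E, hE, rfl⟩ := hAB
  obtain ⟨F, hF, rfl⟩ := hBC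
  exact ⟨F * E, hF.mul hE, by simp only [transpose_mul, Matrix.mul_assoc]⟩

theorem symm {A B : Matrix ι ι R} (h : ElemCong A B) : ElemCong B A := by
  obtain ⟨E, hE, rfl⟩ := h
  obtain ⟨F, hF, hEF⟩ := hE.exists_mul_eq_one
  refine ⟨F, hF, ?_⟩
  calc B = (E * F)ᵀ * B * (E * F) := by simp [hEF]
    _ = Fᵀ * (Eᵀ * B * E) * F := by simp only [transpose_mul, Matrix.mul_assoc]

theorem reindex (e : ι ≃ κ) {A B : Matrix ι ι R} (h : ElemCong A B) :
    ElemCong (Matrix.reindex e e A) (Matrix.reindex e e B) := by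
  obtain ⟨E, hE, rfl⟩ := h
  refine ⟨Matrix.reindex e e E, hE.reindex e, ?_⟩
  simp only [reindex_apply, transpose_submatrix, submatrix_mul_equiv]

theorem fromBlocks_left {A A' : Matrix ι ι R} (h : ElemCong A A') (B : Matrix κ κ R) :
    ElemCong (fromBlocks A 0 0 B) (fromBlocks A' 0 0 B) := by
  obtain ⟨E, hE, rfl⟩ := h
  exact ⟨fromBlocks E 0 0 1, hE.fromBlocks_one₂₂, by
    simp [fromBlocks_transpose, fromBlocks_multiply]⟩

theorem fromBlocks_right (A : Matrix ι ι R) {B B' : Matrix κ κ R} (h : ElemCong B B') :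
    ElemCong (fromBlocks A 0 0 B) (fromBlocks A 0 0 B') := by
  obtain ⟨E, hE, rfl⟩ := h
  exact ⟨fromBlocks 1 0 0 E, hE.fromBlocks_one₁₁, by
    simp [fromBlocks_transpose, fromBlocks_multiply]⟩

theorem fromBlocks_comm (A B : Matrix ι ι R) :
    ElemCong (fromBlocks A 0 0 B) (fromBlocks B 0 0 A) :=
  ⟨fromBlocks 0 1 (-1) 0, IsElementary.fromBlocks_zero_one_neg_one_zero, by
    simp [fromBlocks_transpose, fromBlocks_multiply]⟩

theorem hyperbolic_fromBlocks {f f' σ : Matrix ι ι R} {c : R} (hc : 2 * c = 1)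
    (hσ : σᵀ = σ) (hσσ : σ * σ = 1) (hf : fᵀ = -f) (hff' : f * f' = 1) :
    ElemCong (fromBlocks 0 (-σ) σ 0) (fromBlocks f 0 0 (σ * f' * σ)) := by
  set g := σ * f' * σ with hg
  have hf'f : f' * f = 1 := mul_eq_one_comm.mp hff'
  have hg_skew : gᵀ = -g := by
    simp [hg, transpose_mul, hσ, transpose_eq_neg_of_mul_eq_one hf hff', Matrix.mul_assoc]
  have hfσg : fᵀ * σ * g = -σ := by
    simp [hg, hf, ← Matrix.mul_assoc, Matrix.mul_assoc f σ σ, hσσ, hff']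
  have hgσf : g * (σ * f) = σ := by
    simp [hg, Matrix.mul_assoc, ← Matrix.mul_assoc σ σ f, hσσ, hf'f]
  set B := -(c • (σ * g)) with hB
  have hBσ : σ * B + (-(Bᵀ * σ) + g) = 0 := by
    simp only [hB, transpose_neg, transpose_smul, transpose_mul, hσ, hg_skew, Matrix.mul_neg,
      Matrix.neg_mul, Matrix.mul_smul, Matrix.smul_mul, ← Matrix.mul_assoc, hσσ, Matrix.one_mul,
      Matrix.mul_assoc g σ σ, Matrix.mul_one, smul_neg, neg_neg]
    calc -(c • g) + (-(c • g) + g) = g - (2 * c) • g := by module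
      _ = 0 := by rw [hc, one_smul, sub_self]
  refine ⟨fromBlocks 1 0 (σ * f) 1 * fromBlocks 1 B 0 1,
    (IsElementary.fromBlocks_lower_unipotent _).mul (IsElementary.fromBlocks_upper_unipotent _), ?_⟩
  have hL : (fromBlocks 1 0 (σ * f) 1)ᵀ * fromBlocks f 0 0 g * fromBlocks 1 0 (σ * f) 1 =
      fromBlocks 0 (-σ) σ g := by
    simp only [fromBlocks_transpose, transpose_one, transpose_mul, hσ, transpose_zero,
      fromBlocks_multiply, one_mul, mul_zero, add_zero, zero_add, zero_mul, mul_one, fromBlocks_inj,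
      and_true]
    refine ⟨?_, hfσg, hgσf⟩
    rw [hfσg, Matrix.neg_mul, ← Matrix.mul_assoc, hσσ, Matrix.one_mul, add_neg_cancel]
  have hU : (fromBlocks 1 B 0 1)ᵀ * fromBlocks 0 (-σ) σ g * fromBlocks 1 B 0 1 =
      fromBlocks 0 (-σ) σ 0 := by
    simpa [fromBlocks_transpose, fromBlocks_multiply] using hBσ
  calc fromBlocks 0 (-σ) σ 0
      = (fromBlocks 1 B 0 1)ᵀ * ((fromBlocks 1 0 (σ * f) 1)ᵀ * fromBlocks f 0 0 g *
          fromBlocks 1 0 (σ * f) 1) * fromBlocks 1 B 0 1 := by rw [hL, hU]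
    _ = _ := by simp only [transpose_mul, Matrix.mul_assoc]

theorem reindex_iff (e : ι ≃ κ) {A B : Matrix ι ι R} :
    ElemCong (Matrix.reindex e e A) (Matrix.reindex e e B) ↔ ElemCong A B :=
  ⟨fun h => by simpa [reindex_apply] using h.reindex e.symm, reindex e⟩

theorem fromBlocks_fromBlocks_comm {ρ : Type} [DecidableEq ρ] [Fintype ρ]
    (A C : Matrix ι ι R) (B : Matrix κ κ R) (D : Matrix ρ ρ R) :
    ElemCong (fromBlocks (fromBlocks A 0 0 B) 0 0 (fromBlocks C 0 0 D))
      (fromBlocks (fromBlocks C 0 0 B) 0 0 (fromBlocks A 0 0 D)) := by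
  have hsplit (A C : Matrix ι ι R) :
      Matrix.reindex (Equiv.sumSumSumComm ι κ ι ρ) (Equiv.sumSumSumComm ι κ ι ρ)
        (fromBlocks (fromBlocks A 0 0 B) 0 0 (fromBlocks C 0 0 D)) =
        fromBlocks (fromBlocks A 0 0 C) 0 0 (fromBlocks B 0 0 D) := by
    ext ((i | i) | (i | i)) ((j | j) | (j | j)) <;> simp
  rw [← reindex_iff (Equiv.sumSumSumComm ι κ ι ρ), hsplit, hsplit]
  exact (fromBlocks_comm A C).fromBlocks_left _

end ElemCong

section Pairing

variable {R : Type} [CommRing R] {n : ℕ}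

def pairPartner (i : Fin (2 * n)) : Fin (2 * n) :=
  ⟨if (i : ℕ) % 2 = 0 then i + 1 else i - 1, by have := i.isLt; split <;> omega⟩

theorem pairPartner_pairPartner (i : Fin (2 * n)) : pairPartner (pairPartner i) = i := by
  have := i.isLt
  ext
  simp only [pairPartner]
  split <;> split <;> omega

theorem eq_pairPartner_comm {i j : Fin (2 * n)} : j = pairPartner i ↔ i = pairPartner j :=
  ⟨fun h => h ▸ (pairPartner_pairPartner i).symm, fun h => h ▸ (pairPartner_pairPartner j).symm⟩

def pairMat (c : Fin (2 * n) → R) : Matrix (Fin (2 * n)) (Fin (2 * n)) R :=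
  of fun i j => if j = pairPartner i then c i else 0

theorem transpose_pairMat (c : Fin (2 * n) → R) :
    (pairMat c)ᵀ = pairMat (fun i => c (pairPartner i)) := by
  ext i j
  simp only [pairMat, transpose_apply, of_apply, eq_pairPartner_comm (i := i)]
  split_ifs with h <;> simp [h, pairPartner_pairPartner]

theorem pairMat_mul_pairMat (c d : Fin (2 * n) → R) :
    pairMat c * pairMat d = diagonal fun i => c i * d (pairPartner i) := by
  ext i j
  rw [mul_apply, Finset.sum_eq_single (pairPartner i) (fun k _ hk => by simp [pairMat, hk])
    (by simp)]
  simp [pairMat, diagonal_apply, pairPartner_pairPartner, eq_comm]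

theorem diagonal_mul_pairMat (d c : Fin (2 * n) → R) :
    diagonal d * pairMat c = pairMat (d * c) := by
  ext i j
  simp [pairMat, diagonal_mul]

theorem sigmaMat_eq_pairMat : sigmaMat R (2 * n) = pairMat 1 := by
  ext i j
  have := i.isLt
  simp only [sigmaMat, pairMat, of_apply, Fin.ext_iff, pairPartner, Pi.one_apply]
  split_ifs <;> first | rfl | omega

def psiSign (i : Fin (2 * n)) : R := if (i : ℕ) % 2 = 0 then 1 else -1

theorem psi_eq_pairMat : psi R (2 * n) = pairMat psiSign := by
  ext i j
  have := i.isLt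
  simp only [psi, pairMat, of_apply, Fin.ext_iff, pairPartner, psiSign]
  split_ifs <;> first | rfl | omega

theorem psiSign_pairPartner (i : Fin (2 * n)) : psiSign (pairPartner i) = -(psiSign i : R) := by
  have := i.isLt
  simp only [psiSign, pairPartner]
  split_ifs <;> first | omega | simp

theorem psiSign_mul_self (i : Fin (2 * n)) : psiSign i * psiSign i = (1 : R) := by
  simp only [psiSign]
  split_ifs <;> simp

theorem sigmaMat_transpose : (sigmaMat R (2 * n))ᵀ = sigmaMat R (2 * n) := by
  rw [sigmaMat_eq_pairMat, transpose_pairMat]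
  rfl

theorem sigmaMat_mul_self : sigmaMat R (2 * n) * sigmaMat R (2 * n) = 1 := by
  simp [sigmaMat_eq_pairMat, pairMat_mul_pairMat]

theorem psi_transpose : (psi R (2 * n))ᵀ = -psi R (2 * n) := by
  rw [psi_eq_pairMat, transpose_pairMat]
  ext i j
  simp only [pairMat, Matrix.neg_apply, of_apply, psiSign_pairPartner]
  split_ifs <;> simp

theorem psi_mul_transpose : psi R (2 * n) * (psi R (2 * n))ᵀ = 1 := by
  simp [psi_eq_pairMat, transpose_pairMat, pairMat_mul_pairMat, pairPartner_pairPartner,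
    psiSign_mul_self]

theorem sigmaMat_mul_transpose_psi_mul_sigmaMat :
    sigmaMat R (2 * n) * (psi R (2 * n))ᵀ * sigmaMat R (2 * n) = psi R (2 * n) := by
  simp [psi_eq_pairMat, sigmaMat_eq_pairMat, transpose_pairMat, pairMat_mul_pairMat,
    diagonal_mul_pairMat, pairPartner_pairPartner]

end Pairing

section Oplus

variable {R : Type} [CommRing R]

theorem finSumFinEquiv_symm_of_lt {a b : ℕ} (i : Fin (a + b)) (h : (i : ℕ) < a) :
    finSumFinEquiv.symm i = .inl ⟨i, h⟩ := by
  rw [Equiv.symm_apply_eq, finSumFinEquiv_apply_left]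
  rfl

theorem finSumFinEquiv_symm_of_le {a b : ℕ} (i : Fin (a + b)) (h : a ≤ (i : ℕ)) :
    finSumFinEquiv.symm i = .inr ⟨i - a, by omega⟩ := by
  rw [Equiv.symm_apply_eq, finSumFinEquiv_apply_right]
  ext
  simp only [Fin.val_natAdd]
  omega

theorem oplus_apply {a b : ℕ} (M : Matrix (Fin a) (Fin a) R) (N : Matrix (Fin b) (Fin b) R)
    (i j : Fin (a + b)) :
    oplus M N i j =
      if hi : (i : ℕ) < a then
        if hj : (j : ℕ) < a then M ⟨i, hi⟩ ⟨j, hj⟩ else 0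
      else
        if (j : ℕ) < a then 0 else N ⟨i - a, by omega⟩ ⟨j - a, by omega⟩ := by
  rw [oplus, reindex_apply, submatrix_apply]
  rcases lt_or_ge (i : ℕ) a with hi | hi <;> rcases lt_or_ge (j : ℕ) a with hj | hj <;>
    simp [hi, hj, hi.not_gt, hj.not_gt, finSumFinEquiv_symm_of_lt, finSumFinEquiv_symm_of_le]

theorem matCast_oplus_oplus {a b c : ℕ} (h : a + (b + c) = a + b + c)
    (A : Matrix (Fin a) (Fin a) R) (B : Matrix (Fin b) (Fin b) R) (C : Matrix (Fin c) (Fin c) R) :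
    matCast h (oplus A (oplus B C)) = oplus (oplus A B) C := by
  ext i j
  simp only [matCast, reindex_apply, submatrix_apply, finCongr_symm, finCongr_apply,
    oplus_apply, Fin.val_cast]
  split_ifs <;> first | rfl | omega | (congr 1 <;> ext <;> simp only <;> omega)

theorem oplus_psi_psi {a : ℕ} (b : ℕ) (ha : Even a) :
    oplus (psi R a) (psi R b) = psi R (a + b) := by
  obtain ⟨k, rfl⟩ := ha
  ext i j
  rw [oplus_apply]
  simp only [psi]
  split_ifs <;> first | rfl | omega

theorem fromBlocks_reindex_reindex {ι κ ι' κ' : Type} (e : ι ≃ ι') (e' : κ ≃ κ')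
    (A : Matrix ι ι R) (B : Matrix κ κ R) :
    fromBlocks (reindex e e A) 0 0 (reindex e' e' B) =
      reindex (e.sumCongr e') (e.sumCongr e') (fromBlocks A 0 0 B) := by
  ext (i | i) (j | j) <;> simp

theorem ElemCong.oplus_left {a b : ℕ} {A A' : Matrix (Fin a) (Fin a) R} (h : ElemCong A A')
    (B : Matrix (Fin b) (Fin b) R) : ElemCong (oplus A B) (oplus A' B) :=
  (h.fromBlocks_left B).reindex _

theorem ElemCong.oplus_right {a b : ℕ} (A : Matrix (Fin a) (Fin a) R)
    {B B' : Matrix (Fin b) (Fin b) R} (h : ElemCong B B') : ElemCong (oplus A B) (oplus A B') :=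
  (h.fromBlocks_right A).reindex _

theorem ElemCong.oplus_oplus_comm {a b d : ℕ} (A C : Matrix (Fin a) (Fin a) R)
    (B : Matrix (Fin b) (Fin b) R) (D : Matrix (Fin d) (Fin d) R) :
    ElemCong (oplus (oplus A B) (oplus C D)) (oplus (oplus C B) (oplus A D)) := by
  simp only [oplus, fromBlocks_reindex_reindex]
  exact ((ElemCong.fromBlocks_fromBlocks_comm A C B D).reindex _).reindex _

end Oplus

theorem ElemCong.oplus_conj_inv_psi {R : Type} [CommRing R] (h2 : IsUnit (2 : R)) {n : ℕ}
    {f : Matrix (Fin (2 * n)) (Fin (2 * n)) R} (hf : fᵀ = -f) (hdet : IsUnit f.det) :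
    ElemCong (oplus f (sigmaMat R (2 * n) * f⁻¹ * sigmaMat R (2 * n))) (psi R (2 * n + 2 * n)) := by
  obtain ⟨c, hc⟩ := h2.exists_right_inv
  have hfK := hyperbolic_fromBlocks hc sigmaMat_transpose sigmaMat_mul_self hf
    (mul_nonsing_inv f hdet)
  have hψK := hyperbolic_fromBlocks hc sigmaMat_transpose sigmaMat_mul_self
    (psi_transpose (n := n)) psi_mul_transpose
  rw [sigmaMat_mul_transpose_psi_mul_sigmaMat] at hψK
  rw [← oplus_psi_psi _ (even_two_mul n)]
  exact (hfK.symm.trans hψK).reindex finSumFinEquiv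

theorem WittEquiv.of_elemCong {R : Type} [CommRing R] {a b : ℕ} {G : Matrix (Fin a) (Fin a) R}
    {G' : Matrix (Fin b) (Fin b) R}
    (h : ElemCong (oplus G (psi R b)) (matCast (by omega) (oplus G' (psi R a)))) :
    WittEquiv G G' :=
  let ⟨E, hE, hGE⟩ := h
  ⟨0, E, hE, hGE⟩

theorem witt_cocycle_relation_general
    (R : Type) [CommRing R] (h2 : IsUnit (2 : R)) (n : ℕ)
    (f₀ f₁ f₂ : Matrix (Fin (2 * n)) (Fin (2 * n)) R)
    (hf₁skew : f₁ᵀ = -f₁) (hf₁ : IsUnit f₁.det) :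
    WittEquiv
      (oplus (oplus f₁ (sigmaMat R (2 * n) * f₀⁻¹ * sigmaMat R (2 * n)))
             (oplus f₂ (sigmaMat R (2 * n) * f₁⁻¹ * sigmaMat R (2 * n))))
      (oplus f₂ (sigmaMat R (2 * n) * f₀⁻¹ * sigmaMat R (2 * n))) := by
  apply WittEquiv.of_elemCong
  rw [← oplus_psi_psi _ (Even.add_self (2 * n)), matCast_oplus_oplus]
  exact ((ElemCong.oplus_oplus_comm f₁ f₂ _ _).trans
    ((ElemCong.oplus_conj_inv_psi h2 hf₁skew hf₁).oplus_right _)).oplus_left _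

/-- cocycle relation in `W'_E(R)`. For invertible
skew-symmetric `f₀, f₁, f₂` of size `2n`,
`(f₁ ⊥ σf₀⁻¹σ) ⊥ (f₂ ⊥ σf₁⁻¹σ) ∼ f₂ ⊥ σf₀⁻¹σ`. -/
theorem witt_cocycle_relation
    (R : Type) [CommRing R] (h2 : IsUnit (2 : R)) (n : ℕ)
    (f₀ f₁ f₂ : Matrix (Fin (2 * n)) (Fin (2 * n)) R)
    (hf₀skew : f₀ᵀ = -f₀) (hf₁skew : f₁ᵀ = -f₁) (hf₂skew : f₂ᵀ = -f₂)
    (hf₀ : IsUnit f₀.det) (hf₁ : IsUnit f₁.det) (hf₂ : IsUnit f₂.det) :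
    WittEquiv
      (oplus (oplus f₁ (sigmaMat R (2 * n) * f₀⁻¹ * sigmaMat R (2 * n)))
             (oplus f₂ (sigmaMat R (2 * n) * f₁⁻¹ * sigmaMat R (2 * n))))
      (oplus f₂ (sigmaMat R (2 * n) * f₀⁻¹ * sigmaMat R (2 * n))) :=
  witt_cocycle_relation_general R h2 n f₀ f₁ f₂ hf₁skew hf₁
end

section
/- Let R be a commutative ring with 2 invertible and let G ∈ GL_{2n}(R) be such that Gᵗψ_{2n}G ∼ ψ_2. Then there exist s ≥ 0 and E ∈ E_{2(n+s)}(R) such that (G ⊥ I_{2s})·E is symplectic, i.e., ((G ⊥ I_{2s})E)ᵗ ψ_{2(n+s)} ((G ⊥ I_{2s})E) = ψ_{2(n+s)}. (Exactness at K_1(R) of the sequence K_1Sp(R) → K_1(R) → W'_E(R): if η(G) is trivial then the class of G comes from a symplectic matrix.) -/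
open Matrix Polynomial

/-!
Unfolding `Gᵀψ_{2n}G ∼ ψ₂` gives `t` and an elementary `E` with
`(Gᵀψ_{2n}G) ⊥ ψ_{2+2t} = Eᵀ ψ E`, where `ψ = ψ_{2n+2+2t} = ψ_{2n} ⊥ ψ_{2+2t}`. The left side is
`Kᵀ ψ K` for `K = G ⊥ I_{2+2t}`, and since `E_m(R)` is closed under inverses, `K E⁻¹` is symplectic.
-/

section Oplus

variable {R : Type} [CommRing R] {a b : ℕ}

lemma oplus_mul (M M' : Matrix (Fin a) (Fin a) R) (N N' : Matrix (Fin b) (Fin b) R) :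
    oplus M N * oplus M' N' = oplus (M * M') (N * N') := by
  simp [oplus, submatrix_mul_equiv, fromBlocks_multiply]

lemma oplus_transpose (M : Matrix (Fin a) (Fin a) R) (N : Matrix (Fin b) (Fin b) R) :
    (oplus M N)ᵀ = oplus Mᵀ Nᵀ := by
  simp [oplus, transpose_submatrix, fromBlocks_transpose]

lemma oplus_transpose_mul_mul (G A : Matrix (Fin a) (Fin a) R) (B : Matrix (Fin b) (Fin b) R) :
    oplus (Gᵀ * A * G) B = (oplus G 1)ᵀ * oplus A B * oplus G 1 := by
  simp [oplus_transpose, oplus_mul]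

lemma matCast_psi (h : a = b) : matCast h (psi R a) = psi R b := by
  subst h; simp [matCast]

lemma psi_oplus (ha : Even a) : oplus (psi R a) (psi R b) = psi R (a + b) := by
  obtain ⟨k, rfl⟩ := ha
  ext i j
  induction i using Fin.addCases <;> induction j using Fin.addCases <;>
    simp only [oplus, reindex_apply, submatrix_apply,
      finSumFinEquiv_symm_apply_castAdd, finSumFinEquiv_symm_apply_natAdd, fromBlocks_apply₁₁,
      fromBlocks_apply₁₂, fromBlocks_apply₂₁, fromBlocks_apply₂₂, Matrix.zero_apply, psi,
      Fin.val_castAdd, Fin.val_natAdd] <;>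
    split_ifs <;> first | rfl | omega

end Oplus

lemma IsElementary.exists_mul_eq_one_s15 {ι R : Type} [DecidableEq ι] [Fintype ι] [CommRing R]
    {M : Matrix ι ι R} (hM : IsElementary M) : ∃ N, IsElementary N ∧ M * N = 1 := by
  induction hM using Submonoid.closure_induction with
  | mem A hA =>
    obtain ⟨i, j, r, hij, rfl⟩ := hA
    refine ⟨transvection i j (-r), Submonoid.subset_closure ⟨i, j, -r, hij, rfl⟩, ?_⟩
    rw [← transvection, transvection_mul_transvection_same _ _ hij, add_neg_cancel,
      transvection_zero]
  | one => exact ⟨1, Submonoid.one_mem _, mul_one 1⟩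
  | mul A B _ _ ihA ihB =>
    obtain ⟨A', hA', hAA'⟩ := ihA
    obtain ⟨B', hB', hBB'⟩ := ihB
    refine ⟨B' * A', Submonoid.mul_mem _ hB' hA', ?_⟩
    rw [mul_assoc, ← mul_assoc B, hBB', one_mul, hAA']

lemma transpose_mul_mul_eq_self_of_congr {ι R : Type} [DecidableEq ι] [Fintype ι] [CommRing R]
    {J K E F : Matrix ι ι R} (h : Kᵀ * J * K = Eᵀ * J * E) (hEF : E * F = 1) :
    (K * F)ᵀ * J * (K * F) = J :=
  calc (K * F)ᵀ * J * (K * F) = Fᵀ * (Kᵀ * J * K) * F := by simp only [transpose_mul, mul_assoc]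
    _ = (E * F)ᵀ * J * (E * F) := by rw [h]; simp only [transpose_mul, mul_assoc]
    _ = J := by simp [hEF]

theorem eta_trivial_implies_symplectic_general
    (R : Type) [CommRing R] (n : ℕ)
    (G : Matrix (Fin (2 * n)) (Fin (2 * n)) R)
    (hW : WittEquiv (Gᵀ * psi R (2 * n) * G) (psi R 2)) :
    ∃ (s : ℕ) (E : Matrix (Fin (2 * n + 2 * s)) (Fin (2 * n + 2 * s)) R),
      IsElementary E ∧
        (oplus G (1 : Matrix (Fin (2 * s)) (Fin (2 * s)) R) * E)ᵀ *
            psi R (2 * n + 2 * s) *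
            (oplus G (1 : Matrix (Fin (2 * s)) (Fin (2 * s)) R) * E) =
          psi R (2 * n + 2 * s) := by
  obtain ⟨t, E, hE, heq⟩ := hW
  rw [psi_oplus even_two, matCast_psi, oplus_transpose_mul_mul, psi_oplus (even_two_mul n)] at heq
  obtain ⟨F, hF, hEF⟩ := hE.exists_mul_eq_one_s15
  have hsymp : ∃ F : Matrix (Fin (2 * n + (2 + 2 * t))) (Fin (2 * n + (2 + 2 * t))) R,
      IsElementary F ∧ (oplus G 1 * F)ᵀ * psi R _ * (oplus G 1 * F) = psi R _ :=
    ⟨F, hF, transpose_mul_mul_eq_self_of_congr heq hEF⟩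
  rw [show 2 + 2 * t = 2 * (1 + t) by ring] at hsymp
  exact ⟨1 + t, hsymp⟩

/-- exactness at `K₁(R)` in Proposition `exactII`. If
`Gᵗψ_{2n}G ∼ ψ₂`, then there are `s ≥ 0` and an elementary matrix
`E ∈ E_{2(n+s)}(R)` such that `(G ⊥ I_{2s})·E` is symplectic. -/
theorem eta_trivial_implies_symplectic
    (R : Type) [CommRing R] (h2 : IsUnit (2 : R)) (n : ℕ)
    (G : Matrix (Fin (2 * n)) (Fin (2 * n)) R) (hG : IsUnit G.det)
    (hW : WittEquiv (Gᵀ * psi R (2 * n) * G) (psi R 2)) :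
    ∃ (s : ℕ) (E : Matrix (Fin (2 * n + 2 * s)) (Fin (2 * n + 2 * s)) R),
      IsElementary E ∧
        (oplus G (1 : Matrix (Fin (2 * s)) (Fin (2 * s)) R) * E)ᵀ *
            psi R (2 * n + 2 * s) *
            (oplus G (1 : Matrix (Fin (2 * s)) (Fin (2 * s)) R) * E) =
          psi R (2 * n + 2 * s) :=
  eta_trivial_implies_symplectic_general R n G hW
end
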